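/- Let p be a prime, let w be an infinite word with letters w(1), w(2), …, and let y ∈ ℚ_p² be nonzero with (w, y) ∈ LMad. Then there exists k₀ ∈ ℕ such that for every k > k₀ and all integers n, l ≥ 1: if U_k(T^{n−1} w) = U_k(T^{l−1} w) and U_k(T^n w) = U_k(T^l w), then w(n) = w(l). -/

import Mathlib

open Matrix Filter

/-- The matrix `A_a = [[0,1],[1,a]]` associated to a letter `a`. -/
def Amat (a : ℕ) : Matrix (Fin 2) (Fin 2) ℤ := !![0, 1; 1, (a : ℤ)]

/-- The matrix `A_u` associated to a finite word `u` (product of the `A_a`). -/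
def Aword (u : List ℕ) : Matrix (Fin 2) (Fin 2) ℤ := (u.map Amat).prod

/-- The prefix of length `n` of an infinite word `w`. -/
def wordPrefix (w : ℕ → ℕ) (n : ℕ) : List ℕ := (List.range n).map w

/-- The left shift `T^m w` of an infinite word. -/
def shiftW (w : ℕ → ℕ) (m : ℕ) : ℕ → ℕ := fun i => w (m + i)

/-- Distance from a real number to the nearest integer. -/
noncomputable def distNearestInt (t : ℝ) : ℝ := |t - round t|

/-- `q ∈ PBad_ε` : `q` is a `p`-adically badly approximable vector with constant `ε`. -/
def PBadE (p : ℕ) [Fact p.Prime] (ε : ℝ) (q : Fin 2 → ℚ_[p]) : Prop :=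
  ∀ a b : ℤ, ¬(a = 0 ∧ b = 0) →
    ε / max ((a : ℝ) ^ 2) ((b : ℝ) ^ 2) ≤
      ‖(a : ℚ_[p]) * q 0 + (b : ℚ_[p]) * q 1‖ / max ‖q 0‖ ‖q 1‖

/-- An integer matrix viewed as a matrix over `ℚ_[p]`. -/
noncomputable def matQ (p : ℕ) [Fact p.Prime] (M : Matrix (Fin 2) (Fin 2) ℤ) :
    Matrix (Fin 2) (Fin 2) ℚ_[p] := M.map Int.cast

/-- `(w, y) ∈ LMad_ε`. -/
def LMadE (p : ℕ) [Fact p.Prime] (ε : ℝ) (w : ℕ → ℕ) (y : Fin 2 → ℚ_[p]) : Prop :=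
  (∀ n, 1 ≤ w n ∧ (w n : ℤ) ≤ ⌊ε⁻¹⌋ + 1) ∧
  ∀ n : ℕ, PBadE p ε (Matrix.mulVec (matQ p (Aword (wordPrefix w n))ᵀ) y)

/-- `(w, y) ∈ LMad`. -/
def LMad (p : ℕ) [Fact p.Prime] (w : ℕ → ℕ) (y : Fin 2 → ℚ_[p]) : Prop :=
  ∃ ε > 0, LMadE p ε w y

/-- The projective distance `d` on nonzero vectors of `ℚ_[p]²`. -/
noncomputable def pdist (p : ℕ) [Fact p.Prime] (u v : Fin 2 → ℚ_[p]) : ℝ :=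
  ‖u 0 * v 1 - u 1 * v 0‖ / (max ‖u 0‖ ‖u 1‖ * max ‖v 0‖ ‖v 1‖)

/-- `q ∈ B_k(w, y)` : `q` is `p^{-k}`-close to some `(A_{w_n})ᵀ y`. -/
def inBk (p : ℕ) [Fact p.Prime] (k : ℕ) (w : ℕ → ℕ) (y : Fin 2 → ℚ_[p])
    (q : Fin 2 → ℚ_[p]) : Prop :=
  q ≠ 0 ∧ ∃ n : ℕ,
    pdist p q (Matrix.mulVec (matQ p (Aword (wordPrefix w n))ᵀ) y) ≤ (p : ℝ) ^ (-(k : ℤ))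

/-- `U_k(w)` : set of reductions mod `p^k` of the matrices of all prefixes of `w`. -/
def Uk (p k : ℕ) (w : ℕ → ℕ) : Set (Matrix (Fin 2) (Fin 2) (ZMod (p ^ k))) :=
  { M | ∃ n : ℕ, M = (Aword (wordPrefix w n)).map Int.cast }

/-- The finite word `u` occurs in `w` at position `m`. -/
def occursAt (w : ℕ → ℕ) (u : List ℕ) (m : ℕ) : Prop :=
  u = (List.range u.length).map fun i => w (m + i)

/-- `u` is a factor of the infinite word `w`. -/
def IsFactor (u : List ℕ) (w : ℕ → ℕ) : Prop := ∃ m, occursAt w u m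

/-- `w` is recurrent: every factor occurs infinitely often. -/
def Recurrent (w : ℕ → ℕ) : Prop :=
  ∀ u : List ℕ, IsFactor u w → ∀ M : ℕ, ∃ m, M ≤ m ∧ occursAt w u m

/-- `w` is uniformly recurrent: recurrent with bounded gaps between occurrences. -/
def UniformlyRecurrent (w : ℕ → ℕ) : Prop :=
  Recurrent w ∧
    ∀ u : List ℕ, IsFactor u w →
      ∃ d : ℕ, ∀ m : ℕ, ∃ m', m ≤ m' ∧ m' ≤ m + d ∧ occursAt w u m'

/-- The complexity `P(w, n)` : number of distinct factors of `w` of length `n`. -/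
noncomputable def complexity (w : ℕ → ℕ) (n : ℕ) : ℕ :=
  Set.ncard { u : List ℕ | u.length = n ∧ IsFactor u w }

/-- `a` is the sequence of partial quotients of the continued fraction expansion of `x`,
obtained by iterating the Gauss map. -/
def IsCFSeq (x : ℝ) (a : ℕ → ℕ) : Prop :=
  ∃ ξ : ℕ → ℝ, ξ 0 = x ∧
    ∀ n, (0 < ξ n ∧ ξ n < 1) ∧ ((a n : ℤ) = ⌊(ξ n)⁻¹⌋) ∧ ξ (n + 1) = (ξ n)⁻¹ - (a n : ℝ)

/-- `Q` is the (index-shifted) sequence of denominators of the convergents of the continued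
fraction with partial quotients `a` : `Q (n+1)` is the paper's `q_n`. -/
def IsCFDen (a : ℕ → ℕ) (Q : ℕ → ℤ) : Prop :=
  Q 0 = 0 ∧ Q 1 = 1 ∧ ∀ n, Q (n + 2) = (a n : ℤ) * Q (n + 1) + Q n

/-!
Write `c = w(n) - w(l)`. Since `A_{w(l)} [[1, c], [0, 1]] = A_{w(n)}` and `A_{w(l)}` is
invertible, the two equalities of `U_k`-sets show by induction on `j` that every power
`[[1, j c], [0, 1]]` is congruent mod `p^k` to the matrix `A_v` of some prefix `v` of `T^{l+1} w`.
Put `q = (A_{w_{l+1}})ᵀ y`, so that `(A_{w_{l+1} v})ᵀ y = A_vᵀ q ≡ (q₀, j c q₀ + q₁)`. If `c ≠ 0`,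
then `c` is a `p`-adic unit up to a power of `p` bounded in terms of `ε`, and one finds integers
`a, b` bounded independently of `k` and some `j` with `|a + b (j c + q₁ / q₀)|_p ≤ p^{-k}`. The
linear form `a X₀ + b X₁` is then of size `p^{-k}` at `A_vᵀ q`, which for large `k` contradicts
`A_vᵀ q ∈ PBad_ε`.
-/

section Words

lemma Aword_cons (a : ℕ) (u : List ℕ) : Aword (a :: u) = Amat a * Aword u := by
  simp [Aword]

lemma Aword_append (u v : List ℕ) : Aword (u ++ v) = Aword u * Aword v := by
  simp [Aword]

lemma wordPrefix_zero (w : ℕ → ℕ) : wordPrefix w 0 = [] := rfl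

lemma wordPrefix_shiftW_succ (w : ℕ → ℕ) (m n : ℕ) :
    wordPrefix (shiftW w m) (n + 1) = w m :: wordPrefix (shiftW w (m + 1)) n := by
  simp only [wordPrefix, List.range_succ_eq_map, List.map_cons, List.map_map, shiftW]
  congr 2
  funext i
  show w (m + (i + 1)) = w (m + 1 + i)
  rw [Nat.add_comm i 1, Nat.add_assoc]

lemma wordPrefix_add (w : ℕ → ℕ) (m n : ℕ) :
    wordPrefix w (m + n) = wordPrefix w m ++ wordPrefix (shiftW w m) n := by
  simp only [wordPrefix, List.range_add, List.map_append, List.map_map]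
  rfl

end Words

section UnipotentMatrices

variable {R : Type*} [CommRing R]

lemma unipotent_pow (s : R) (j : ℕ) :
    !![1, s; 0, 1] ^ j = !![1, (j : R) * s; 0, 1] := by
  induction j with
  | zero => simp [Matrix.one_fin_two]
  | succ j ih =>
    rw [pow_succ, ih, Matrix.mul_fin_two]
    push_cast
    congr 1
    ring_nf

lemma map_intCast_mul (M N : Matrix (Fin 2) (Fin 2) ℤ) :
    (M * N).map (Int.cast : ℤ → R) = M.map Int.cast * N.map Int.cast :=
  Matrix.map_mul (f := Int.castRingHom R)

lemma map_Amat (a : ℕ) : (Amat a).map (Int.cast : ℤ → R) = !![0, 1; 1, (a : R)] := by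
  ext i j
  fin_cases i <;> fin_cases j <;> simp [Amat]

lemma isUnit_map_Amat (a : ℕ) : IsUnit ((Amat a).map (Int.cast : ℤ → R)) := by
  rw [Matrix.isUnit_iff_isUnit_det, map_Amat, Matrix.det_fin_two_of]
  simp

lemma map_Amat_mul_unipotent (a b : ℕ) :
    (Amat b).map (Int.cast : ℤ → R) * !![1, (a : R) - b; 0, 1] = (Amat a).map Int.cast := by
  simp [map_Amat]

end UnipotentMatrices

section PrefixMatrices

variable {p k : ℕ} {w : ℕ → ℕ}

lemma one_mem_Uk : 1 ∈ Uk p k w :=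
  ⟨0, by simp [wordPrefix_zero, Aword]⟩

lemma map_Amat_mul_mem_Uk {m : ℕ} {M : Matrix (Fin 2) (Fin 2) (ZMod (p ^ k))}
    (hM : M ∈ Uk p k (shiftW w (m + 1))) :
    (Amat (w m)).map Int.cast * M ∈ Uk p k (shiftW w m) := by
  obtain ⟨r, rfl⟩ := hM
  exact ⟨r + 1, by rw [wordPrefix_shiftW_succ, Aword_cons, map_intCast_mul]⟩

lemma eq_one_or_eq_map_Amat_mul_of_mem_Uk {m : ℕ} {M : Matrix (Fin 2) (Fin 2) (ZMod (p ^ k))}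
    (hM : M ∈ Uk p k (shiftW w m)) :
    M = 1 ∨ ∃ M' ∈ Uk p k (shiftW w (m + 1)), M = (Amat (w m)).map Int.cast * M' := by
  obtain ⟨_ | r, rfl⟩ := hM
  · left
    simp [wordPrefix_zero, Aword]
  · right
    exact ⟨_, ⟨r, rfl⟩, by rw [wordPrefix_shiftW_succ, Aword_cons, map_intCast_mul]⟩

theorem unipotent_pow_mem_Uk (hpk : p ^ k ≠ 1) {n l : ℕ}
    (h₀ : Uk p k (shiftW w n) = Uk p k (shiftW w l))
    (h₁ : Uk p k (shiftW w (n + 1)) = Uk p k (shiftW w (l + 1))) (j : ℕ) :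
    !![1, (w n : ZMod (p ^ k)) - w l; 0, 1] ^ j ∈ Uk p k (shiftW w (l + 1)) := by
  have : Nontrivial (ZMod (p ^ k)) := ZMod.nontrivial_iff.mpr hpk
  induction j with
  | zero => exact one_mem_Uk
  | succ j ih =>
    have hmem := h₀ ▸ map_Amat_mul_mem_Uk (h₁ ▸ ih)
    rcases eq_one_or_eq_map_Amat_mul_of_mem_Uk hmem with hone | ⟨M, hM, hAM⟩
    · -- `A_{w n}` times an upper unipotent matrix has `(0, 0)` entry `0`, so it is not `1`
      have hentry := congrFun (congrFun hone 0) 0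
      simp [map_Amat, unipotent_pow, Matrix.mul_apply] at hentry
    · have hcancel : (Amat (w l)).map Int.cast * !![1, (w n : ZMod (p ^ k)) - w l; 0, 1] ^ (j + 1)
          = (Amat (w l)).map Int.cast * M := by
        rw [pow_succ', ← mul_assoc, map_Amat_mul_unipotent]
        exact hAM
      exact (isUnit_map_Amat _).mul_left_cancel hcancel ▸ hM

end PrefixMatrices

section Padic

variable {p : ℕ} [Fact p.Prime]

lemma Padic.exists_nat_lt_norm_sub_le {x : ℚ_[p]} (hx : ‖x‖ ≤ 1) (m : ℕ) :
    ∃ a : ℕ, a < p ^ m ∧ ‖x - a‖ ≤ (p : ℝ) ^ (-(m : ℤ)) := by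
  set z : ℤ_[p] := ⟨x, hx⟩
  refine ⟨z.appr m, z.appr_lt m, ?_⟩
  have h := (PadicInt.norm_le_pow_iff_mem_span_pow _ m).mpr (z.appr_spec m)
  rwa [PadicInt.norm_def] at h

lemma Padic.norm_intCast_mul_add_mul_le {k : ℕ} {r s : ℤ} (hr : (p : ℤ) ^ k ∣ r)
    (hs : (p : ℤ) ^ k ∣ s) (u v : ℚ_[p]) :
    ‖(r : ℚ_[p]) * u + s * v‖ ≤ (p : ℝ) ^ (-(k : ℤ)) * max ‖u‖ ‖v‖ := by
  have hr' := (Padic.norm_int_le_pow_iff_dvd r k).mpr hr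
  have hs' := (Padic.norm_int_le_pow_iff_dvd s k).mpr hs
  have hpk : (0 : ℝ) ≤ (p : ℝ) ^ (-(k : ℤ)) := by positivity
  calc ‖(r : ℚ_[p]) * u + s * v‖ ≤ max ‖(r : ℚ_[p]) * u‖ ‖(s : ℚ_[p]) * v‖ :=
        Padic.nonarchimedean _ _
    _ ≤ max ((p : ℝ) ^ (-(k : ℤ)) * ‖u‖) ((p : ℝ) ^ (-(k : ℤ)) * ‖v‖) := by
        rw [norm_mul, norm_mul]
        gcongr
    _ = (p : ℝ) ^ (-(k : ℤ)) * max ‖u‖ ‖v‖ := (mul_max_of_nonneg _ _ hpk).symm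

lemma Padic.lt_norm_intCast_of_abs_lt {c : ℤ} (hc : c ≠ 0) {ν : ℕ} (hcν : |c| < (p : ℤ) ^ ν) :
    (p : ℝ) ^ (-(ν : ℤ)) < ‖(c : ℚ_[p])‖ := by
  by_contra! hle
  have hdvd := (Padic.norm_int_le_pow_iff_dvd c ν).mp hle
  exact hcν.not_ge (Int.le_of_dvd (abs_pos.mpr hc) ((dvd_abs _ _).mpr hdvd))

lemma Padic.exists_nat_norm_add_mul_add_le {θ : ℚ_[p]} (hθ : ‖θ‖ ≤ 1) {d : ℤ} {μ : ℕ}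
    (hd : (p : ℝ) ^ (-(μ : ℤ)) < ‖(d : ℚ_[p])‖) (k : ℕ) :
    ∃ a j : ℕ, a < p ^ μ ∧ ‖(a : ℚ_[p]) + j * d + θ‖ ≤ (p : ℝ) ^ (-(k : ℤ)) := by
  obtain ⟨a, ha, haθ⟩ := Padic.exists_nat_lt_norm_sub_le (x := -θ) (by rwa [norm_neg]) μ
  have hd0 : (d : ℚ_[p]) ≠ 0 := norm_pos_iff.mp (lt_of_le_of_lt (by positivity) hd)
  set y₀ : ℚ_[p] := -(a + θ) / d
  have hy₀ : ‖y₀‖ ≤ 1 := by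
    rw [norm_div, div_le_one (norm_pos_iff.mpr hd0), norm_neg]
    refine le_trans (le_of_eq ?_) (haθ.trans hd.le)
    rw [← norm_neg]
    ring_nf
  obtain ⟨j, -, hj⟩ := Padic.exists_nat_lt_norm_sub_le hy₀ k
  refine ⟨a, j, ha, ?_⟩
  have hform : (a : ℚ_[p]) + j * d + θ = d * (j - y₀) := by
    rw [mul_sub, mul_div_cancel₀ _ hd0]
    ring
  calc ‖(a : ℚ_[p]) + j * d + θ‖ = ‖(d : ℚ_[p])‖ * ‖y₀ - j‖ := by
        rw [hform, norm_mul, norm_sub_rev]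
    _ ≤ 1 * (p : ℝ) ^ (-(k : ℤ)) := by
        gcongr
        exact Padic.norm_int_le_one d
    _ = (p : ℝ) ^ (-(k : ℤ)) := one_mul _

lemma lt_norm_intCast_sub_of_le_floor_add_one {ε : ℝ} {u v : ℕ}
    (hu : 1 ≤ u ∧ (u : ℤ) ≤ ⌊ε⁻¹⌋ + 1) (hv : 1 ≤ v ∧ (v : ℤ) ≤ ⌊ε⁻¹⌋ + 1) {β : ℕ}
    (hβ : ε⁻¹ < (p : ℝ) ^ β) (huv : u ≠ v) :
    (p : ℝ) ^ (-(β : ℤ)) < ‖(((u : ℤ) - v : ℤ) : ℚ_[p])‖ := by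
  have hfloor : ⌊ε⁻¹⌋ < (p : ℤ) ^ β := Int.floor_lt.mpr (by exact_mod_cast hβ)
  exact Padic.lt_norm_intCast_of_abs_lt (by omega) (abs_lt.mpr ⟨by omega, by omega⟩)

end Padic

lemma tendsto_zpow_neg_natCast_atTop {r : ℝ} (hr : 1 < r) :
    Tendsto (fun k : ℕ => r ^ (-(k : ℤ))) atTop (nhds 0) := by
  simpa [Function.comp_def] using
    tendsto_inv_atTop_zero.comp (tendsto_pow_atTop_atTop_of_one_lt hr)

section Vectors

variable {p : ℕ} [Fact p.Prime]

lemma matQ_transpose_mulVec_apply (C : Matrix (Fin 2) (Fin 2) ℤ) (q : Fin 2 → ℚ_[p])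
    (i : Fin 2) : (matQ p Cᵀ *ᵥ q) i = C 0 i * q 0 + C 1 i * q 1 := by
  simp [matQ, Matrix.mulVec, dotProduct, Fin.sum_univ_two]

lemma matQ_wordPrefix_add_mulVec (w : ℕ → ℕ) (y : Fin 2 → ℚ_[p]) (s m : ℕ) :
    matQ p (Aword (wordPrefix w (s + m)))ᵀ *ᵥ y =
      matQ p (Aword (wordPrefix (shiftW w s) m))ᵀ *ᵥ (matQ p (Aword (wordPrefix w s))ᵀ *ᵥ y) := by
  rw [wordPrefix_add, Aword_append, transpose_mul, matQ, map_intCast_mul, ← mulVec_mulVec]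
  rfl

lemma PBadE.mul_max_norm_le_norm_apply_zero {ε : ℝ} {q : Fin 2 → ℚ_[p]} (hq : PBadE p ε q) :
    ε * max ‖q 0‖ ‖q 1‖ ≤ ‖q 0‖ := by
  have h : ε ≤ ‖q 0‖ / max ‖q 0‖ ‖q 1‖ := by simpa using hq 1 0 (by simp)
  rcases (le_max_of_le_left (norm_nonneg (q 0)) : 0 ≤ max ‖q 0‖ ‖q 1‖).eq_or_lt with hM | hM
  · rw [← hM, mul_zero]
    exact norm_nonneg _
  · exact (le_div_iff₀ hM).mp h

lemma PBadE.apply_zero_ne_zero {ε : ℝ} {q : Fin 2 → ℚ_[p]} (hq : PBadE p ε q) (hε : 0 < ε) :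
    q 0 ≠ 0 := by
  intro h0
  have h := hq 1 0 (by simp)
  simp [h0] at h
  linarith

/-- Modulo `p ^ k` the vector `Cᵀ q` agrees with `(q 0, t q 0 + q 1)`. -/
lemma norm_linearForm_sub_le_of_map_eq_unipotent {k : ℕ} {C : Matrix (Fin 2) (Fin 2) ℤ} {t : ℤ}
    (hC : C.map (Int.cast : ℤ → ZMod (p ^ k)) = !![1, (t : ZMod (p ^ k)); 0, 1])
    (q : Fin 2 → ℚ_[p]) (a b : ℤ) :
    ‖(a * (matQ p Cᵀ *ᵥ q) 0 + b * (matQ p Cᵀ *ᵥ q) 1) - ((a + b * t : ℤ) * q 0 + b * q 1)‖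
      ≤ (p : ℝ) ^ (-(k : ℤ)) * max ‖q 0‖ ‖q 1‖ := by
  have hdvd : ∀ {x y : ℤ}, (x : ZMod (p ^ k)) = y → (p : ℤ) ^ k ∣ x - y := fun h => by
    exact_mod_cast (ZMod.intCast_eq_intCast_iff_dvd_sub _ _ _).mp h.symm
  have entry := fun i j => congrFun (congrFun hC i) j
  have h00 : (p : ℤ) ^ k ∣ C 0 0 - 1 := hdvd (by simpa using entry 0 0)
  have h01 : (p : ℤ) ^ k ∣ C 0 1 - t := hdvd (by simpa using entry 0 1)
  have h10 : (p : ℤ) ^ k ∣ C 1 0 - 0 := hdvd (by simpa using entry 1 0)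
  have h11 : (p : ℤ) ^ k ∣ C 1 1 - 1 := hdvd (by simpa using entry 1 1)
  convert Padic.norm_intCast_mul_add_mul_le (dvd_add (h00.mul_left a) (h01.mul_left b))
    (dvd_add (h10.mul_left a) (h11.mul_left b)) (q 0) (q 1) using 2
  simp only [matQ_transpose_mulVec_apply]
  push_cast
  ring

end Vectors

section Approximation

variable {p : ℕ} [Fact p.Prime]

lemma PBadE.exists_small_linearForm {ε : ℝ} {q : Fin 2 → ℚ_[p]} (hq : PBadE p ε q)
    (hε : 0 < ε) {β : ℕ} (hβ : ε⁻¹ < (p : ℝ) ^ β) {c : ℤ}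
    (hc : (p : ℝ) ^ (-(β : ℤ)) < ‖(c : ℚ_[p])‖) (k : ℕ) :
    ∃ a b : ℤ, b ≠ 0 ∧ max ((a : ℝ) ^ 2) ((b : ℝ) ^ 2) ≤ (p : ℝ) ^ (4 * β) ∧
      ∃ j : ℕ, ‖((a + b * (j * c) : ℤ) : ℚ_[p]) * q 0 + b * q 1‖
        ≤ (p : ℝ) ^ (-(k : ℤ)) * max ‖q 0‖ ‖q 1‖ := by
  have hp : (1 : ℝ) < p := by exact_mod_cast (Fact.out : p.Prime).one_lt
  have hq0 := hq.apply_zero_ne_zero hε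
  have hq0M := hq.mul_max_norm_le_norm_apply_zero
  have hpβ : ‖(p : ℚ_[p]) ^ β‖ = (p : ℝ) ^ (-(β : ℤ)) := Padic.norm_p_pow β
  -- `b = p ^ β` makes `b q₁ / q₀` integral, and `p ^ β c` still has valuation below `2 β`
  set θ : ℚ_[p] := (p : ℚ_[p]) ^ β * q 1 / q 0
  have hθ : ‖θ‖ ≤ 1 := by
    have hq1 : ε * ‖q 1‖ ≤ ‖q 0‖ := (mul_le_mul_of_nonneg_left (le_max_right _ _) hε.le).trans hq0M
    have hpβε : (p : ℝ) ^ (-(β : ℤ)) < ε := by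
      rw [_root_.zpow_neg, zpow_natCast]
      exact inv_lt_of_inv_lt₀ hε hβ
    rw [norm_div, norm_mul, hpβ, div_le_one (norm_pos_iff.mpr hq0)]
    exact (mul_le_mul_of_nonneg_right hpβε.le (norm_nonneg _)).trans hq1
  set d : ℤ := (p : ℤ) ^ β * c
  have hd : (p : ℝ) ^ (-((2 * β : ℕ) : ℤ)) < ‖(d : ℚ_[p])‖ := by
    calc (p : ℝ) ^ (-((2 * β : ℕ) : ℤ)) = (p : ℝ) ^ (-(β : ℤ)) * (p : ℝ) ^ (-(β : ℤ)) := by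
          rw [← zpow_add₀ (by positivity)]
          push_cast
          ring_nf
      _ < (p : ℝ) ^ (-(β : ℤ)) * ‖(c : ℚ_[p])‖ := by gcongr
      _ = ‖(d : ℚ_[p])‖ := by
          simp only [d]
          push_cast
          rw [norm_mul, hpβ]
  obtain ⟨a, j, ha, hsmall⟩ := Padic.exists_nat_norm_add_mul_add_le hθ hd k
  refine ⟨a, (p : ℤ) ^ β, pow_ne_zero _ (by exact_mod_cast (Fact.out : p.Prime).ne_zero), ?_, j, ?_⟩
  · have ha' : (a : ℝ) ≤ (p : ℝ) ^ (2 * β) := by exact_mod_cast ha.le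
    apply max_le
    · calc (a : ℝ) ^ 2 ≤ ((p : ℝ) ^ (2 * β)) ^ 2 := by gcongr
        _ = (p : ℝ) ^ (4 * β) := by ring
    · push_cast
      rw [← pow_mul]
      exact pow_le_pow_right₀ hp.le (by omega)
  · have hform : ((a + (p : ℤ) ^ β * (j * c) : ℤ) : ℚ_[p]) * q 0 + ((p : ℤ) ^ β : ℤ) * q 1
        = ((a : ℚ_[p]) + j * d + θ) * q 0 := by
      simp only [θ, d]
      field_simp
      push_cast
      ring
    rw [hform, norm_mul]
    exact mul_le_mul hsmall (le_max_left _ _) (norm_nonneg _) (by positivity)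

lemma PBadE.sq_le_of_map_eq_unipotent {ε : ℝ} (hε : 0 < ε) {k : ℕ}
    (hk : (p : ℝ) ^ (-(k : ℤ)) < ε) {q : Fin 2 → ℚ_[p]} (hq : PBadE p ε q)
    {C : Matrix (Fin 2) (Fin 2) ℤ} {t : ℤ}
    (hC : C.map (Int.cast : ℤ → ZMod (p ^ k)) = !![1, (t : ZMod (p ^ k)); 0, 1])
    (hCq : PBadE p ε (matQ p Cᵀ *ᵥ q)) {a b : ℤ} (hb : b ≠ 0)
    (hsmall : ‖((a + b * t : ℤ) : ℚ_[p]) * q 0 + b * q 1‖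
      ≤ (p : ℝ) ^ (-(k : ℤ)) * max ‖q 0‖ ‖q 1‖) :
    ε ^ 2 ≤ (p : ℝ) ^ (-(k : ℤ)) * max ((a : ℝ) ^ 2) ((b : ℝ) ^ 2) := by
  set Q := matQ p Cᵀ *ᵥ q
  set M := max ‖q 0‖ ‖q 1‖
  set δ := (p : ℝ) ^ (-(k : ℤ))
  have hqM := hq.mul_max_norm_le_norm_apply_zero
  have hM : 0 < M := (norm_pos_iff.mpr (hq.apply_zero_ne_zero hε)).trans_le (le_max_left _ _)
  have hform : ‖a * Q 0 + b * Q 1‖ ≤ δ * M := by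
    have h := norm_linearForm_sub_le_of_map_eq_unipotent hC q a b
    calc ‖a * Q 0 + b * Q 1‖
        = ‖((a * Q 0 + b * Q 1) - ((a + b * t : ℤ) * q 0 + b * q 1))
            + (((a + b * t : ℤ) : ℚ_[p]) * q 0 + b * q 1)‖ := by rw [sub_add_cancel]
      _ ≤ max ‖(a * Q 0 + b * Q 1) - ((a + b * t : ℤ) * q 0 + b * q 1)‖
            ‖((a + b * t : ℤ) : ℚ_[p]) * q 0 + b * q 1‖ := Padic.nonarchimedean _ _
      _ ≤ δ * M := max_le h hsmall
  have hQ0 : ‖Q 0‖ = ‖q 0‖ := by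
    have h := norm_linearForm_sub_le_of_map_eq_unipotent hC q 1 0
    simp only [Int.cast_one, one_mul, Int.cast_zero, zero_mul, add_zero] at h
    rw [← norm_neg (q 0)]
    refine Padic.norm_eq_of_norm_add_lt_right ?_
    rw [norm_neg, ← sub_eq_add_neg]
    calc ‖Q 0 - q 0‖ ≤ δ * M := h
      _ < ε * M := by gcongr
      _ ≤ ‖q 0‖ := hqM
  have hbad := hCq a b (fun h => hb h.2)
  have hb' : (b : ℝ) ≠ 0 := by exact_mod_cast hb
  have hX : 0 < max ((a : ℝ) ^ 2) ((b : ℝ) ^ 2) :=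
    (by positivity : (0 : ℝ) < (b : ℝ) ^ 2).trans_le (le_max_right _ _)
  have : ε / max ((a : ℝ) ^ 2) ((b : ℝ) ^ 2) ≤ δ / ε :=
    calc ε / max ((a : ℝ) ^ 2) ((b : ℝ) ^ 2) ≤ ‖a * Q 0 + b * Q 1‖ / max ‖Q 0‖ ‖Q 1‖ := hbad
      _ ≤ (δ * M) / (ε * M) := by
          gcongr
          rw [hQ0]
          exact hqM.trans (le_max_left _ _)
      _ = δ / ε := mul_div_mul_right _ _ hM.ne'
  rw [sq]
  exact (div_le_div_iff₀ hX hε).mp this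

end Approximation

theorem stmt_19_general (p : ℕ) [Fact p.Prime] (w : ℕ → ℕ) (y : Fin 2 → ℚ_[p])
    (hL : LMad p w y) :
    ∃ k₀ : ℕ, ∀ k : ℕ, k₀ < k → ∀ n l : ℕ,
      Uk p k (shiftW w n) = Uk p k (shiftW w l) →
      Uk p k (shiftW w (n + 1)) = Uk p k (shiftW w (l + 1)) →
      w n = w l := by
  obtain ⟨ε, hε, hletters, hbad⟩ := hL
  have hp : (1 : ℝ) < p := by exact_mod_cast (Fact.out : p.Prime).one_lt
  obtain ⟨β, hβ⟩ := pow_unbounded_of_one_lt ε⁻¹ hp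
  obtain ⟨k₀, hk₀⟩ := eventually_atTop.mp <| (tendsto_zpow_neg_natCast_atTop hp).eventually <|
    gt_mem_nhds (lt_min hε (by positivity : 0 < ε ^ 2 / (p : ℝ) ^ (4 * β)))
  refine ⟨k₀, fun k hk n l h₀ h₁ => ?_⟩
  by_contra hne
  obtain ⟨a, b, hb, hab, j, hsmall⟩ := (hbad (l + 1)).exists_small_linearForm hε hβ
    (lt_norm_intCast_sub_of_le_floor_add_one (hletters n) (hletters l) hβ hne) k
  obtain ⟨m, hm⟩ := unipotent_pow_mem_Uk
    (Nat.one_lt_pow (by omega) (Fact.out : p.Prime).one_lt).ne' h₀ h₁ j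
  have hC : (Aword (wordPrefix (shiftW w (l + 1)) m)).map (Int.cast : ℤ → ZMod (p ^ k))
      = !![1, ((j * ((w n : ℤ) - w l) : ℤ) : ZMod (p ^ k)); 0, 1] := by
    rw [← hm, unipotent_pow]
    push_cast
    rfl
  have hQ := hbad (l + 1 + m)
  rw [matQ_wordPrefix_add_mulVec w y (l + 1) m] at hQ
  obtain ⟨hδε, hδ⟩ := lt_min_iff.mp (hk₀ k hk.le)
  have hsq := (hbad (l + 1)).sq_le_of_map_eq_unipotent hε hδε hC hQ hb hsmall
  exact (hsq.trans (mul_le_mul_of_nonneg_left hab (by positivity))).not_gt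
    ((lt_div_iff₀ (by positivity)).mp hδ)

/-- for `(w, y) ∈ LMad` and `k` large, consecutive pairs of sets
`U_k(T^n w), U_k(T^{n+1} w)` determine the letter of `w` at position `n`. -/
theorem stmt_19 (p : ℕ) [Fact p.Prime] (w : ℕ → ℕ) (y : Fin 2 → ℚ_[p]) (hy : y ≠ 0)
    (hL : LMad p w y) :
    ∃ k₀ : ℕ, ∀ k : ℕ, k₀ < k → ∀ n l : ℕ,
      Uk p k (shiftW w n) = Uk p k (shiftW w l) →
      Uk p k (shiftW w (n + 1)) = Uk p k (shiftW w (l + 1)) →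
      w n = w l :=
  stmt_19_general p w y hL
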